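/- Let β > 0 and set Ω_0 = Ω_1 = Ω_2 = 2β and Ω_k = 0 for all integers k ≥ 3. For x ≥ 0 and integer k ≥ 1, define Ω_k^*(x) = Σ_{n≥1} ( Σ_{α∈ℕ^n, α_1+···+α_n = k} Π_{j=1}^n Ω_{α_j} ) · x^n/n!. Then Ω_k^*(x) ≤ Σ_{n ≥ ⌈k/2⌉} (6xβ)^n/n!, and consequently Ω_k^*(x) ≤ e^{6xβ}·(6xβ)^{⌈k/2⌉}/⌈k/2⌉!. -/

import Mathlib

/-!
Only `α ∈ {0, 1, 2}ⁿ` contribute to the coefficient of `xⁿ / n!` in `Ω_k^*(x)`. Hence the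
coefficient vanishes unless `k ≤ 2n`, i.e. `n ≥ ⌈k/2⌉`, and is at most the sum over all
of `{0, 1, 2}ⁿ`, which is `(Ω_0 + Ω_1 + Ω_2)ⁿ = (6β)ⁿ`. The tail `Σ_{n ≥ m} yⁿ/n!` of the
exponential series is at most `e^y yᵐ/m!` because `m! j! ≤ (m + j)!`.
-/

/-- `Ω_0 = Ω_1 = Ω_2 = 2β` and `Ω_k = 0` for `k ≥ 3`. -/
noncomputable def omegaCoef (β : ℝ) (k : ℕ) : ℝ := if k ≤ 2 then 2 * β else 0

/-- `Ω_k^*(x) = Σ_{n≥1} (Σ_{α∈ℕ^n, α_1+⋯+α_n=k} Π_j Ω_{α_j}) · x^n/n!`. -/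
noncomputable def omegaStar (β : ℝ) (k : ℕ) (x : ℝ) : ℝ :=
  ∑' n : ℕ, if n = 0 then 0 else
    (∑ α ∈ Finset.Nat.antidiagonalTuple n k, ∏ j, omegaCoef β (α j)) *
      x ^ n / (n.factorial : ℝ)

open Finset

theorem tsum_ite_le_eq_tsum_add {M : Type*} [AddCommMonoid M] [TopologicalSpace M]
    (f : ℕ → M) (m : ℕ) : ∑' n, (if m ≤ n then f n else 0) = ∑' j, f (j + m) := by
  rw [← (add_left_injective m).tsum_eq]
  · simp
  · intro n hn
    have hmn : m ≤ n := by
      by_contra h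
      simp [h] at hn
    exact ⟨n - m, Nat.sub_add_cancel hmn⟩

namespace Real

theorem summable_pow_div_factorial_tail (y : ℝ) (m : ℕ) :
    Summable fun n : ℕ => if m ≤ n then y ^ n / (n.factorial : ℝ) else 0 :=
  (summable_nat_add_iff m).1 <| by
    simpa using (summable_nat_add_iff m).2 (summable_pow_div_factorial y)

theorem tsum_pow_div_factorial_tail_le {y : ℝ} (hy : 0 ≤ y) (m : ℕ) :
    ∑' n : ℕ, (if m ≤ n then y ^ n / (n.factorial : ℝ) else 0) ≤
      exp y * y ^ m / (m.factorial : ℝ) := by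
  have hterm : ∀ j : ℕ, y ^ (j + m) / ((j + m).factorial : ℝ) ≤
      y ^ m / (m.factorial : ℝ) * (y ^ j / (j.factorial : ℝ)) := by
    intro j
    have hfact : (m.factorial : ℝ) * j.factorial ≤ (j + m).factorial := by
      rw [add_comm]
      exact_mod_cast Nat.le_of_dvd (Nat.factorial_pos _)
        (Nat.factorial_mul_factorial_dvd_factorial_add m j)
    rw [div_mul_div_comm, pow_add, mul_comm (y ^ j)]
    exact div_le_div_of_nonneg_left (by positivity) (by positivity) hfact
  have hexp : HasSum (fun j : ℕ => y ^ j / (j.factorial : ℝ)) (exp y) := by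
    simpa [exp_eq_exp_ℝ] using NormedSpace.expSeries_div_hasSum_exp y
  calc ∑' n : ℕ, (if m ≤ n then y ^ n / (n.factorial : ℝ) else 0)
      = ∑' j : ℕ, y ^ (j + m) / ((j + m).factorial : ℝ) := tsum_ite_le_eq_tsum_add _ m
    _ ≤ ∑' j : ℕ, y ^ m / (m.factorial : ℝ) * (y ^ j / (j.factorial : ℝ)) :=
        ((summable_nat_add_iff m).2 (summable_pow_div_factorial y)).tsum_le_tsum hterm
          (hexp.summable.mul_left _)
    _ = exp y * y ^ m / (m.factorial : ℝ) := by
        rw [tsum_mul_left, hexp.tsum_eq]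
        ring

end Real

section AntidiagonalTuple

variable {c : ℕ → ℝ} {d : ℕ}

theorem apply_le_of_prod_ne_zero (hc : ∀ i, d < i → c i = 0) {n : ℕ} {α : Fin n → ℕ}
    (h : ∏ j, c (α j) ≠ 0) (j : Fin n) : α j ≤ d := by
  by_contra! hj
  exact h (prod_eq_zero (mem_univ j) (hc _ hj))

theorem sum_antidiagonalTuple_prod_le_pow (hc0 : ∀ i, 0 ≤ c i) (hc : ∀ i, d < i → c i = 0)
    (n k : ℕ) :
    ∑ α ∈ Finset.Nat.antidiagonalTuple n k, ∏ j, c (α j) ≤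
      (∑ i ∈ range (d + 1), c i) ^ n := by
  classical
  calc ∑ α ∈ Finset.Nat.antidiagonalTuple n k, ∏ j, c (α j)
      = ∑ α ∈ (Finset.Nat.antidiagonalTuple n k).filter (fun α => ∏ j, c (α j) ≠ 0),
          ∏ j, c (α j) := (sum_filter_ne_zero _).symm
    _ ≤ ∑ α ∈ Fintype.piFinset fun _ : Fin n => range (d + 1), ∏ j, c (α j) := by
        refine sum_le_sum_of_subset_of_nonneg (fun α hα => ?_)
          fun α _ _ => prod_nonneg fun j _ => hc0 _
        simp only [Fintype.mem_piFinset, mem_range, Nat.lt_succ_iff]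
        exact apply_le_of_prod_ne_zero hc (mem_filter.1 hα).2
    _ = (∑ i ∈ range (d + 1), c i) ^ n := by
        rw [← prod_univ_sum, prod_const, card_univ, Fintype.card_fin]

theorem sum_antidiagonalTuple_prod_eq_zero (hc : ∀ i, d < i → c i = 0) {n k : ℕ}
    (h : d * n < k) : ∑ α ∈ Finset.Nat.antidiagonalTuple n k, ∏ j, c (α j) = 0 := by
  refine sum_eq_zero fun α hα => ?_
  by_contra hne
  have hle : ∑ j, α j ≤ ∑ _j : Fin n, d :=
    sum_le_sum fun j _ => apply_le_of_prod_ne_zero hc hne j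
  rw [Finset.Nat.mem_antidiagonalTuple] at hα
  simp only [sum_const, card_univ, Fintype.card_fin, smul_eq_mul] at hle
  lia

end AntidiagonalTuple

section OmegaStar

variable {β x : ℝ}

theorem omegaCoef_nonneg (hβ : 0 ≤ β) (i : ℕ) : 0 ≤ omegaCoef β i := by
  unfold omegaCoef
  split <;> positivity

theorem omegaCoef_eq_zero (β : ℝ) {i : ℕ} (hi : 2 < i) : omegaCoef β i = 0 := by
  simp [omegaCoef, hi.not_ge]

theorem sum_range_three_omegaCoef (β : ℝ) : ∑ i ∈ range 3, omegaCoef β i = 6 * β := by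
  simp only [sum_range_succ, sum_range_zero, omegaCoef]
  norm_num
  ring

noncomputable def omegaStarTerm (β : ℝ) (k : ℕ) (x : ℝ) (n : ℕ) : ℝ :=
  if n = 0 then 0 else
    (∑ α ∈ Finset.Nat.antidiagonalTuple n k, ∏ j, omegaCoef β (α j)) * x ^ n /
      (n.factorial : ℝ)

theorem omegaStar_eq_tsum (β : ℝ) (k : ℕ) (x : ℝ) :
    omegaStar β k x = ∑' n, omegaStarTerm β k x n := rfl

theorem omegaStarTerm_nonneg (hβ : 0 ≤ β) (hx : 0 ≤ x) (k n : ℕ) :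
    0 ≤ omegaStarTerm β k x n := by
  unfold omegaStarTerm
  split
  · exact le_rfl
  · have : 0 ≤ ∑ α ∈ Finset.Nat.antidiagonalTuple n k, ∏ j, omegaCoef β (α j) :=
      sum_nonneg fun α _ => prod_nonneg fun j _ => omegaCoef_nonneg hβ (α j)
    positivity

theorem omegaStarTerm_le (hβ : 0 ≤ β) (hx : 0 ≤ x) (k n : ℕ) :
    omegaStarTerm β k x n ≤
      if (k + 1) / 2 ≤ n then (6 * x * β) ^ n / (n.factorial : ℝ) else 0 := by
  unfold omegaStarTerm
  split_ifs with hn0 hkn hkn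
  · positivity
  · exact le_rfl
  · have hcoef := sum_range_three_omegaCoef β ▸
      sum_antidiagonalTuple_prod_le_pow (omegaCoef_nonneg hβ) (fun _ => omegaCoef_eq_zero β) n k
    calc (∑ α ∈ Finset.Nat.antidiagonalTuple n k, ∏ j, omegaCoef β (α j)) * x ^ n /
          (n.factorial : ℝ)
        ≤ (6 * β) ^ n * x ^ n / (n.factorial : ℝ) := by gcongr
      _ = (6 * x * β) ^ n / (n.factorial : ℝ) := by rw [← mul_pow, mul_right_comm]
  · rw [sum_antidiagonalTuple_prod_eq_zero (fun _ => omegaCoef_eq_zero β) (by lia)]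
    simp

end OmegaStar

theorem stmt16_general (β : ℝ) (hβ : 0 < β) (x : ℝ) (hx : 0 ≤ x) (k : ℕ) :
    omegaStar β k x ≤
      (∑' n : ℕ, if (k+1)/2 ≤ n then (6 * x * β) ^ n / (n.factorial : ℝ) else 0) ∧
    omegaStar β k x ≤
      Real.exp (6 * x * β) * (6 * x * β) ^ ((k+1)/2) / (((k+1)/2).factorial : ℝ) := by
  have hterm_le := omegaStarTerm_le hβ.le hx k
  have htail := Real.summable_pow_div_factorial_tail (6 * x * β) ((k + 1) / 2)
  have hle : omegaStar β k x ≤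
      ∑' n : ℕ, if (k+1)/2 ≤ n then (6 * x * β) ^ n / (n.factorial : ℝ) else 0 := by
    rw [omegaStar_eq_tsum]
    exact (htail.of_nonneg_of_le (omegaStarTerm_nonneg hβ.le hx k) hterm_le).tsum_le_tsum
      hterm_le htail
  exact ⟨hle, hle.trans (Real.tsum_pow_div_factorial_tail_le (by positivity) _)⟩

/-- `Ω_k^*(x) ≤ Σ_{n ≥ ⌈k/2⌉} (6xβ)^n/n!`, and consequently
`Ω_k^*(x) ≤ e^{6xβ}·(6xβ)^{⌈k/2⌉}/⌈k/2⌉!` (here `⌈k/2⌉ = (k+1)/2` as naturals). -/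
theorem stmt16 (β : ℝ) (hβ : 0 < β) (x : ℝ) (hx : 0 ≤ x) (k : ℕ) (hk : 1 ≤ k) :
    omegaStar β k x ≤
      (∑' n : ℕ, if (k+1)/2 ≤ n then (6 * x * β) ^ n / (n.factorial : ℝ) else 0) ∧
    omegaStar β k x ≤
      Real.exp (6 * x * β) * (6 * x * β) ^ ((k+1)/2) / (((k+1)/2).factorial : ℝ) :=
  stmt16_general β hβ x hx k
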